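/- Let Σ be a totally ordered set, let n ≥ 2, and let ℓ : □[n] → !Σ be any labelling of the n-cube (the 0-cubes of □[n] being canonically identified with [n] = {0,1}^n, so that □[n] has 2^n ≥ 2 vertices). Then for every p with 1 ≤ p ≤ n−1, the map sending a (p+1)-cube y ∈ (□[n])_{p+1} (i.e., a morphism y : □[p+1] → □[n]) to the labelled p-shell consisting of the restriction of y to ∂□[p+1], the inclusion ∂□[p+1] ↪ □[p+1], and the labelling ℓ∘y : □[p+1] → !Σ, is a bijection from (□[n])_{p+1} onto the set of non-twisted labelled p-shells of the labelled precubical set ℓ : □[n] → !Σ. -/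

import Mathlib

open CategoryTheory CategoryTheory.Limits Opposite

/-!
Statement 6: for any labelling `ℓ : □[n] → !Σ` of the `n`-cube (`n ≥ 2`) and
any `1 ≤ p ≤ n-1`, restriction to the boundary is a bijection from the set
`(□[n])_{p+1}` of `(p+1)`-cubes of `□[n]` onto the set of non-twisted labelled
`p`-shells of `ℓ : □[n] → !Σ`.

The cube category `□` is encoded as `BoxCat` (objects `[n] = {0,1}^n` given by
their dimension, morphisms the composites of coface maps
`δ_i^α = Fin.insertNth i α`), precubical sets as presheaves
`BoxCatᵒᵖ ⥤ Type`, `□[n] = yoneda.obj (bx n)`, and the labelling precubical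
set `!Σ` as the presheaf `bang Λ` of nondecreasing words over the totally
ordered set `Λ` (a morphism of `□` acts by deleting the letters of the
non-retained coordinates; both face maps delete the `i`-th letter).
-/

inductive IsBoxMap : ∀ {m n : ℕ}, ((Fin m → Bool) → (Fin n → Bool)) → Prop
  | id (m : ℕ) : IsBoxMap (id : (Fin m → Bool) → (Fin m → Bool))
  | comp {m n : ℕ} (i : Fin (n + 1)) (α : Bool) {f : (Fin m → Bool) → (Fin n → Bool)} :
      IsBoxMap f → IsBoxMap fun ε => i.insertNth α (f ε)

theorem IsBoxMap.le {m n : ℕ} {f : (Fin m → Bool) → (Fin n → Bool)}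
    (h : IsBoxMap f) : m ≤ n := by
  induction h with
  | id => exact le_rfl
  | comp i α h ih => exact ih.trans (Nat.le_succ _)

theorem IsBoxMap.comp' {m n p : ℕ} {f : (Fin m → Bool) → (Fin n → Bool)}
    {g : (Fin n → Bool) → (Fin p → Bool)} (hf : IsBoxMap f) (hg : IsBoxMap g) :
    IsBoxMap (g ∘ f) := by
  induction hg with
  | id => exact hf
  | comp i α h ih => exact ih.comp i α

structure BoxCat where
  dim : ℕ

abbrev bx (n : ℕ) : BoxCat := ⟨n⟩

instance : Category BoxCat where
  Hom m n := { f : (Fin m.dim → Bool) → (Fin n.dim → Bool) // IsBoxMap f }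
  id m := ⟨id, .id m.dim⟩
  comp f g := ⟨g.1 ∘ f.1, f.2.comp' g.2⟩
  id_comp _ := Subtype.ext rfl
  comp_id _ := Subtype.ext rfl
  assoc _ _ _ := Subtype.ext rfl

theorem BoxCat.hom_le {m n : BoxCat} (f : m ⟶ n) : m.dim ≤ n.dim := f.2.le

/-- A representation of a box map `f : {0,1}^m → {0,1}^n` by the strictly
increasing map `σ : Fin m → Fin n` of "retained coordinates". -/
def IsRepr {m n : ℕ} (f : (Fin m → Bool) → (Fin n → Bool)) (σ : Fin m → Fin n) : Prop :=
  StrictMono σ ∧ (∀ ε k, f ε (σ k) = ε k) ∧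
    (∀ j, (∀ k, σ k ≠ j) → ∀ ε ε', f ε j = f ε' j)

theorem IsBoxMap.exists_repr {m n : ℕ} {f : (Fin m → Bool) → (Fin n → Bool)}
    (h : IsBoxMap f) : ∃ σ : Fin m → Fin n, IsRepr f σ := by
  induction h with
  | id =>
    exact ⟨_root_.id, strictMono_id, fun ε k => rfl, fun j hj ε ε' => absurd rfl (hj j)⟩
  | @comp n' i α g hg ih =>
    obtain ⟨σ, hs, he, hc⟩ := ih
    refine ⟨fun k => i.succAbove (σ k), ((Fin.strictMono_succAbove i).comp hs), ?_, ?_⟩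
    · intro ε k
      simp only [Fin.insertNth_apply_succAbove]
      exact he ε k
    · intro j hj ε ε'
      rcases eq_or_ne j i with rfl | hne
      · simp only [Fin.insertNth_apply_same]
      · obtain ⟨j', rfl⟩ := Fin.exists_succAbove_eq hne
        simp only [Fin.insertNth_apply_succAbove]
        exact hc j' (fun k hk => hj k (congrArg i.succAbove hk)) ε ε'

theorem IsRepr.unique {m n : ℕ} {f : (Fin m → Bool) → (Fin n → Bool)}
    {σ τ : Fin m → Fin n} (hσ : IsRepr f σ) (hτ : IsRepr f τ) : σ = τ := by
  obtain ⟨hσ1, hσ2, hσ3⟩ := hσ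
  obtain ⟨hτ1, hτ2, hτ3⟩ := hτ
  have key : ∀ (σ' τ' : Fin m → Fin n), (∀ ε k, f ε (σ' k) = ε k) →
      (∀ j, (∀ k, τ' k ≠ j) → ∀ ε ε', f ε j = f ε' j) →
      Set.range σ' ⊆ Set.range τ' := by
    intro σ' τ' he hc j hj
    obtain ⟨k, rfl⟩ := hj
    by_contra hr
    simp only [Set.mem_range, not_exists] at hr
    have h2 := hc (σ' k) (fun k' h => hr k' h) (fun _ => true) (fun _ => false)
    rw [he, he] at h2
    simp at h2
  exact (hσ1.range_inj hτ1).1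
    (Set.Subset.antisymm (key σ τ hσ2 hτ3) (key τ σ hτ2 hσ3))

/-- The strictly increasing map of retained coordinates of a morphism of `□`. -/
noncomputable def boxSigma {m n : BoxCat} (f : m ⟶ n) : Fin m.dim → Fin n.dim :=
  f.2.exists_repr.choose

theorem boxSigma_isRepr {m n : BoxCat} (f : m ⟶ n) : IsRepr f.1 (boxSigma f) :=
  f.2.exists_repr.choose_spec

theorem boxSigma_strictMono {m n : BoxCat} (f : m ⟶ n) : StrictMono (boxSigma f) :=
  (boxSigma_isRepr f).1

theorem boxSigma_id (m : BoxCat) : boxSigma (𝟙 m) = _root_.id :=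
  (boxSigma_isRepr (𝟙 m)).unique
    ⟨strictMono_id, fun _ _ => rfl, fun j hj _ _ => absurd rfl (hj j)⟩

theorem boxSigma_comp {m n p : BoxCat} (f : m ⟶ n) (g : n ⟶ p) :
    boxSigma (f ≫ g) = boxSigma g ∘ boxSigma f := by
  obtain ⟨hf1, hf2, hf3⟩ := boxSigma_isRepr f
  obtain ⟨hg1, hg2, hg3⟩ := boxSigma_isRepr g
  refine (boxSigma_isRepr (f ≫ g)).unique ⟨hg1.comp hf1, ?_, ?_⟩
  · intro ε k
    show g.1 (f.1 ε) (boxSigma g (boxSigma f k)) = ε k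
    rw [hg2, hf2]
  · intro j hj ε ε'
    show g.1 (f.1 ε) j = g.1 (f.1 ε') j
    by_cases hrg : ∃ k, boxSigma g k = j
    · obtain ⟨k, rfl⟩ := hrg
      rw [hg2, hg2]
      exact hf3 k (fun k' hk' => hj k' (congrArg (boxSigma g) hk')) ε ε'
    · push_neg at hrg
      exact hg3 j hrg _ _

/-- The labelling precubical set `!Σ` of a totally ordered set of labels `Λ`:
`(!Σ)_n` is the set of nondecreasing `n`-tuples of labels, and a morphism
`f : [m] → [n]` of `□` acts by keeping the letters of the `m` coordinates
retained by `f` (so that both face maps `∂_i^0` and `∂_i^1` delete the `i`-th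
letter). -/
noncomputable def bang (Λ : Type) [LinearOrder Λ] : BoxCatᵒᵖ ⥤ Type where
  obj k := { w : Fin (unop k).dim → Λ // Monotone w }
  map {k k'} g := TypeCat.ofHom fun w => ⟨w.1 ∘ boxSigma g.unop, w.2.comp (boxSigma_strictMono g.unop).monotone⟩
  map_id k := by
    refine ConcreteCategory.hom_ext _ _ fun w => ?_
    refine Subtype.ext ?_
    show w.1 ∘ boxSigma (𝟙 (unop k)) = w.1
    rw [boxSigma_id]
    rfl
  map_comp {k k' k''} g g' := by
    refine ConcreteCategory.hom_ext _ _ fun w => ?_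
    refine Subtype.ext ?_
    show w.1 ∘ boxSigma (g'.unop ≫ g.unop) = (w.1 ∘ boxSigma g.unop) ∘ boxSigma g'.unop
    rw [boxSigma_comp]
    rfl

/-- The boundary `∂□[n]` of the representable precubical set `□[n]`:
`(∂□[n])_k = (□[n])_k = □([k],[n])` for `k < n` and `∅` for `k ≥ n`. -/
def boundaryBox (n : ℕ) : BoxCatᵒᵖ ⥤ Type where
  obj k := { f : unop k ⟶ bx n // (unop k).dim < n }
  map {k k'} g := TypeCat.ofHom fun f => ⟨g.unop ≫ f.1, lt_of_le_of_lt (BoxCat.hom_le g.unop) f.2⟩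
  map_id k := by refine ConcreteCategory.hom_ext _ _ fun f => ?_; exact Subtype.ext (Category.id_comp f.1)
  map_comp {k k' k''} g g' := by
    refine ConcreteCategory.hom_ext _ _ fun f => ?_; exact Subtype.ext (Category.assoc g'.unop g.unop f.1)

/-- The inclusion of precubical sets `∂□[n] ⊆ □[n]`. -/
def boundaryIncl (n : ℕ) : boundaryBox n ⟶ yoneda.obj (bx n) where
  app _ := TypeCat.ofHom fun f => f.1
  naturality _ _ _ := rfl

theorem isBoxMap_const : ∀ {k : ℕ} (v : Fin k → Bool),
    IsBoxMap (fun _ : Fin 0 → Bool => v)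
  | 0, v => by
      have h : (fun _ : Fin 0 → Bool => v) =
          (id : (Fin 0 → Bool) → (Fin 0 → Bool)) :=
        funext fun ε => Subsingleton.elim _ _
      exact h ▸ IsBoxMap.id 0
  | (k + 1), v => by
      have h := (isBoxMap_const (Fin.tail v)).comp (0 : Fin (k + 1)) (v 0)
      have e : (fun _ : Fin 0 → Bool => Fin.insertNth (0 : Fin (k + 1)) (v 0) (Fin.tail v)) =
          (fun _ : Fin 0 → Bool => v) := by
        funext ε
        rw [Fin.insertNth_zero']
        exact Fin.cons_self_tail v
      exact e ▸ h

/-- The vertex `v ∈ {0,1}^k` of `□[k]`, seen as a morphism `[0] → [k]` of `□`. -/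
def vertexBox {k : ℕ} (v : Fin k → Bool) : (bx 0 ⟶ bx k) :=
  ⟨fun _ => v, isBoxMap_const v⟩

/-- The canonical identification of the `0`-cubes of `□[n]` with
`[n] = {0,1}^n`. -/
def vertexEquiv (n : ℕ) : (bx 0 ⟶ bx n) ≃ (Fin n → Bool) where
  toFun g := g.1 Fin.elim0
  invFun v := vertexBox v
  left_inv g := Subtype.ext (funext fun ε => congrArg g.1 (Subsingleton.elim _ _))
  right_inv v := rfl

/-- A labelled `p`-shell of a labelled precubical set `ℓ : K → !Σ`: a
commutative square of precubical sets consisting of a morphism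
`x : ∂□[p+1] → K`, the inclusion `∂□[p+1] ↪ □[p+1]`, a labelling
`□[p+1] → !Σ` and `ℓ`. -/
structure LabelledShell {Λ : Type} [LinearOrder Λ] (K : BoxCatᵒᵖ ⥤ Type)
    (ℓ : K ⟶ bang Λ) (p : ℕ) where
  shell : boundaryBox (p + 1) ⟶ K
  lab : yoneda.obj (bx (p + 1)) ⟶ bang Λ
  comm : shell ≫ ℓ = boundaryIncl (p + 1) ≫ lab

/-- The map induced on `0`-cubes `[p+1] = {0,1}^{p+1} → {0,1}^N = K_0` by a
labelled `p`-shell, where `e` is the identification `K_0 = [N]`. -/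
def shellVertexMap {Λ : Type} [LinearOrder Λ] {K : BoxCatᵒᵖ ⥤ Type}
    {ℓ : K ⟶ bang Λ} {p N : ℕ} (e : K.obj (op (bx 0)) ≃ (Fin N → Bool))
    (s : LabelledShell K ℓ p) : (Fin (p + 1) → Bool) → (Fin N → Bool) :=
  fun v => e (s.shell.app (op (bx 0)) ⟨vertexBox v, Nat.succ_pos p⟩)

/-- A labelled shell is non-twisted if its map on `0`-cubes
`x_0 : [p+1] → [N] = K_0` is a composite `ψ ∘ φ` where `ψ : [q] → [N]` is a
morphism of `□` and `φ(ε_1,…,ε_{p+1}) = (ε_{i_1},…,ε_{i_q})` with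
`1 = i_1 ≤ … ≤ i_q = p+1` and `{1,…,p+1} ⊆ {i_1,…,i_q}` (i.e.
`φ(ε) = ε ∘ ind` with `ind` monotone and surjective). -/
def NonTwisted {Λ : Type} [LinearOrder Λ] {K : BoxCatᵒᵖ ⥤ Type}
    {ℓ : K ⟶ bang Λ} {p N : ℕ} (e : K.obj (op (bx 0)) ≃ (Fin N → Bool))
    (s : LabelledShell K ℓ p) : Prop :=
  ∃ (q : ℕ) (ind : Fin q → Fin (p + 1)) (ψ : (Fin q → Bool) → (Fin N → Bool)),
    Monotone ind ∧ Function.Surjective ind ∧ IsBoxMap ψ ∧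
    ∀ v, shellVertexMap e s v = ψ (v ∘ ind)

/-- The labelled `p`-shell of `ℓ : □[n] → !Σ` obtained by restricting a
`(p+1)`-cube `y : □[p+1] → □[n]` to the boundary `∂□[p+1]`, labelled by
`ℓ ∘ y`. -/
noncomputable def cubeShell {Λ : Type} [LinearOrder Λ] {n p : ℕ}
    (ℓ : yoneda.obj (bx n) ⟶ bang Λ) (y : bx (p + 1) ⟶ bx n) :
    LabelledShell (yoneda.obj (bx n)) ℓ p where
  shell := boundaryIncl (p + 1) ≫ yoneda.map y
  lab := yoneda.map y ≫ ℓ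
  comm := Category.assoc _ _ _

/-! A non-twisted shell `x` of `□[n]` has vertex map `ψ ∘ φ`, where `φ` repeats coordinates.
A repeated coordinate would be copied by `ψ` to two different coordinates of `{0,1}^n`, both of
which vary along a codimension-one face of `□[p+1]` retaining it; but the image of that face
under `x` is a cube of `□[n]`, in which each coordinate of the face moves only one coordinate.
So `φ` is the identity, the vertex map is a morphism `y` of `□`, and `x` agrees with the
boundary of `y` since cubes of `□[n]` are determined by their vertices. Finally, for `p ≥ 1`
a label in `(!Σ)_{p+1}` is determined by its faces, so the labelling is `ℓ ∘ y` as well. -/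

theorem IsRepr.apply_eq_of_forall_apply_eq {m n : ℕ} {f : (Fin m → Bool) → (Fin n → Bool)}
    {σ : Fin m → Fin n} (hσ : IsRepr f σ) {j : Fin n} {a : Fin m}
    (h : ∀ ε, f ε j = ε a) : σ a = j := by
  obtain ⟨-, hretained, hconst⟩ := hσ
  by_cases hj : ∃ b, σ b = j
  · obtain ⟨b, rfl⟩ := hj
    have hab : a = b := by simpa using (hretained (fun k => decide (k = b)) b).symm.trans (h _)
    rw [hab]
  · simp only [not_exists] at hj
    simpa using (h (fun _ => true)).symm.trans ((hconst j hj _ (fun _ => false)).trans (h _))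

theorem Fin.funext_of_comp_succAbove {α : Type*} {m : ℕ} (hm : 1 ≤ m) {w w' : Fin (m + 1) → α}
    (h : ∀ i : Fin (m + 1), w ∘ i.succAbove = w' ∘ i.succAbove) : w = w' := by
  funext j
  obtain ⟨i, hi⟩ := Fintype.exists_ne_of_one_lt_card (by simp; omega) j
  obtain ⟨k, rfl⟩ := Fin.exists_succAbove_eq hi.symm
  exact congrFun (h i) k

def coface {p : ℕ} (i : Fin (p + 1)) (α : Bool) : bx p ⟶ bx (p + 1) :=
  ⟨fun ε => i.insertNth α ε, (IsBoxMap.id p).comp i α⟩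

theorem boxSigma_coface {p : ℕ} (i : Fin (p + 1)) (α : Bool) :
    boxSigma (coface i α) = i.succAbove := by
  refine (boxSigma_isRepr (coface i α)).unique ⟨Fin.strictMono_succAbove i, fun ε k => ?_, ?_⟩
  · exact Fin.insertNth_apply_succAbove (α := fun _ => Bool) i α ε k
  · intro j hj ε ε'
    obtain rfl : j = i := by
      by_contra hji
      obtain ⟨k, hk⟩ := Fin.exists_succAbove_eq hji
      exact hj k hk
    simp only [coface, Fin.insertNth_apply_same]

theorem bang_map_coface_val {Λ : Type} [LinearOrder Λ] {p : ℕ} (i : Fin (p + 1)) (α : Bool)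
    (w : (bang Λ).obj (op (bx (p + 1)))) :
    ((bang Λ).map (coface i α).op w).1 = w.1 ∘ i.succAbove := by
  change w.1 ∘ boxSigma (coface i α) = _
  rw [boxSigma_coface]

namespace LabelledShell

variable {Λ : Type} [LinearOrder Λ]

theorem lab_eq_of_shell_eq {K : BoxCatᵒᵖ ⥤ Type} {ℓ : K ⟶ bang Λ} {p : ℕ} (hp : 1 ≤ p)
    {s t : LabelledShell K ℓ p} (h : s.shell = t.shell) : s.lab = t.lab := by
  have lab_face : ∀ (u : LabelledShell K ℓ p) (i : Fin (p + 1)),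
      (yonedaEquiv u.lab).1 ∘ i.succAbove =
        (ℓ.app (op (bx p)) (u.shell.app (op (bx p)) ⟨coface i false, p.lt_succ_self⟩)).1 := by
    intro u i
    rw [← bang_map_coface_val i false, map_yonedaEquiv]
    exact congrArg Subtype.val (ConcreteCategory.congr_hom
      (congrArg (fun φ => NatTrans.app φ (op (bx p))) u.comm) ⟨coface i false, p.lt_succ_self⟩).symm
  refine yonedaEquiv.injective (Subtype.ext (Fin.funext_of_comp_succAbove hp fun i => ?_))
  rw [lab_face, lab_face, h]

theorem ext_of_shell_eq {K : BoxCatᵒᵖ ⥤ Type} {ℓ : K ⟶ bang Λ} {p : ℕ} (hp : 1 ≤ p)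
    {s t : LabelledShell K ℓ p} (h : s.shell = t.shell) : s = t := by
  have hlab := lab_eq_of_shell_eq hp h
  cases s
  cases t
  dsimp only at h hlab
  subst h hlab
  rfl

variable {n p : ℕ} {ℓ : yoneda.obj (bx n) ⟶ bang Λ}

theorem shell_app_apply (s : LabelledShell (yoneda.obj (bx n)) ℓ p) {X : BoxCatᵒᵖ}
    (g : unop X ⟶ bx (p + 1)) (hg : (unop X).dim < p + 1) (v : Fin (unop X).dim → Bool) :
    (s.shell.app X ⟨g, hg⟩).1 v = shellVertexMap (vertexEquiv n) s (g.1 v) := by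
  have hnat := ConcreteCategory.congr_hom
    (s.shell.naturality ((vertexBox v).op : X ⟶ op (bx 0))) ⟨g, hg⟩
  exact (congrArg (vertexEquiv n) hnat).symm

theorem shell_eq_of_shellVertexMap_eq {s t : LabelledShell (yoneda.obj (bx n)) ℓ p}
    (h : shellVertexMap (vertexEquiv n) s = shellVertexMap (vertexEquiv n) t) :
    s.shell = t.shell := by
  refine NatTrans.ext (funext fun X => ConcreteCategory.hom_ext _ _ fun ⟨g, hg⟩ => ?_)
  exact Subtype.ext (funext fun v => by rw [shell_app_apply, shell_app_apply, h])

theorem injective_of_shellVertexMap_eq (hp : 1 ≤ p) (s : LabelledShell (yoneda.obj (bx n)) ℓ p)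
    {q : ℕ} {ind : Fin q → Fin (p + 1)} {ψ : (Fin q → Bool) → (Fin n → Bool)} (hψ : IsBoxMap ψ)
    (h : ∀ v, shellVertexMap (vertexEquiv n) s v = ψ (v ∘ ind)) : Function.Injective ind := by
  intro k k' hkk'
  obtain ⟨σψ, hσψ, hψretained, -⟩ := hψ.exists_repr
  obtain ⟨j, hj⟩ := Fintype.exists_ne_of_one_lt_card (by simp; omega) (ind k)
  obtain ⟨a, ha⟩ := Fin.exists_succAbove_eq hj.symm
  let face := s.shell.app (op (bx p)) ⟨coface j false, p.lt_succ_self⟩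
  have retained : ∀ k'', ind k'' = ind k → boxSigma face a = σψ k'' := fun k'' hk'' =>
    (boxSigma_isRepr face).apply_eq_of_forall_apply_eq fun ε => by
      rw [shell_app_apply, h, hψretained, Function.comp_apply, hk'', ← ha]
      exact Fin.insertNth_apply_succAbove (α := fun _ => Bool) j false ε a
  exact hσψ.injective ((retained k rfl).symm.trans (retained k' hkk'.symm))

theorem nonTwisted_iff_isBoxMap (hp : 1 ≤ p) (s : LabelledShell (yoneda.obj (bx n)) ℓ p) :
    NonTwisted (vertexEquiv n) s ↔ IsBoxMap (shellVertexMap (vertexEquiv n) s) := by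
  refine ⟨fun ⟨q, ind, ψ, hmono, hsurj, hψ, h⟩ => ?_,
    fun hs => ⟨p + 1, id, _, monotone_id, Function.surjective_id, hs, fun _ => rfl⟩⟩
  have hinj := injective_of_shellVertexMap_eq hp s hψ h
  obtain rfl : q = p + 1 := by simpa using Fintype.card_congr (Equiv.ofBijective ind ⟨hinj, hsurj⟩)
  obtain rfl : ind = id := (hmono.strictMono_of_injective hinj).eq_id
  exact (funext h : _ = ψ) ▸ hψ

end LabelledShell

theorem shellVertexMap_cubeShell {Λ : Type} [LinearOrder Λ] {n p : ℕ}
    (ℓ : yoneda.obj (bx n) ⟶ bang Λ) (y : bx (p + 1) ⟶ bx n) :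
    shellVertexMap (vertexEquiv n) (cubeShell ℓ y) = y.1 :=
  rfl

theorem cubeShell_bijective_onto_nonTwisted_general {Λ : Type} [LinearOrder Λ]
    (n : ℕ) (ℓ : yoneda.obj (bx n) ⟶ bang Λ)
    (p : ℕ) (hp1 : 1 ≤ p) :
    (∀ y : bx (p + 1) ⟶ bx n, NonTwisted (vertexEquiv n) (cubeShell ℓ y)) ∧
    Function.Injective (fun y : bx (p + 1) ⟶ bx n => cubeShell ℓ y) ∧
    (∀ s : LabelledShell (yoneda.obj (bx n)) ℓ p,
      NonTwisted (vertexEquiv n) s → ∃ y : bx (p + 1) ⟶ bx n, cubeShell ℓ y = s) := by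
  refine ⟨fun y => ?_, fun y y' h => ?_, fun s hs => ?_⟩
  · rw [LabelledShell.nonTwisted_iff_isBoxMap hp1, shellVertexMap_cubeShell]
    exact y.2
  · simpa only [shellVertexMap_cubeShell] using
      Subtype.ext (congrArg (shellVertexMap (vertexEquiv n)) h)
  · refine ⟨⟨_, (LabelledShell.nonTwisted_iff_isBoxMap hp1 s).1 hs⟩,
      LabelledShell.ext_of_shell_eq hp1 ?_⟩
    exact LabelledShell.shell_eq_of_shellVertexMap_eq (shellVertexMap_cubeShell ℓ _)

/-- For `1 ≤ p ≤ n-1`, sending a `(p+1)`-cube `y ∈ (□[n])_{p+1}` (i.e. a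
morphism `y : □[p+1] → □[n]`, by the Yoneda lemma) to its boundary shell,
labelled by `ℓ ∘ y`, is a bijection from `(□[n])_{p+1}` onto the set of
non-twisted labelled `p`-shells of the labelled precubical set
`ℓ : □[n] → !Σ` (the `0`-cubes of `□[n]` being canonically identified with
`[n] = {0,1}^n` via `vertexEquiv`). -/
theorem cubeShell_bijective_onto_nonTwisted {Λ : Type} [LinearOrder Λ]
    (n : ℕ) (hn : 2 ≤ n) (ℓ : yoneda.obj (bx n) ⟶ bang Λ)
    (p : ℕ) (hp1 : 1 ≤ p) (hp2 : p ≤ n - 1) :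
    (∀ y : bx (p + 1) ⟶ bx n, NonTwisted (vertexEquiv n) (cubeShell ℓ y)) ∧
    Function.Injective (fun y : bx (p + 1) ⟶ bx n => cubeShell ℓ y) ∧
    (∀ s : LabelledShell (yoneda.obj (bx n)) ℓ p,
      NonTwisted (vertexEquiv n) s → ∃ y : bx (p + 1) ⟶ bx n, cubeShell ℓ y = s) :=
  cubeShell_bijective_onto_nonTwisted_general n ℓ p hp1
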